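/- Let D be a free semi-theory with completion functor Φ_D : D → D̄, and let φ : [r] → [s] be a morphism of D whose decomposition φ = α_k ∘ … ∘ α_1 into free generators has α_1 not a projection. If T, T' ∈ Hom_{D̄}([n],[r]) satisfy Φ_D(φ) ∘ T = Φ_D(φ) ∘ T', then T = T'. -/

import Mathlib

open CategoryTheory Limits Topology Topology.Homotopy

noncomputable section

namespace SemiThPaper

/-! ### Weak homotopy equivalences -/

/-- The map induced by a continuous map on homotopy "groups" (sets for `N = Fin 0`). -/
def HomotopyGroup.map {X Y : Type} [TopologicalSpace X] [TopologicalSpace Y]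
    (f : C(X, Y)) (N : Type) (x : X) :
    HomotopyGroup N X x → HomotopyGroup N Y (f x) :=
  Quotient.map
    (fun g => ⟨f.comp g.1, fun y hy => by
      simp only [ContinuousMap.comp_apply]
      rw [g.2 y hy]⟩)
    (fun g h H => H.elim fun H => ⟨H.compContinuousMap f⟩)

/-- The map induced on path components. -/
def ZerothHomotopy.map {X Y : Type} [TopologicalSpace X] [TopologicalSpace Y]
    (f : C(X, Y)) : ZerothHomotopy X → ZerothHomotopy Y :=
  Quotient.map f (fun _ _ h => h.elim fun γ => ⟨γ.map f.continuous⟩)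

/-- A weak homotopy equivalence of topological spaces: a continuous map inducing a
bijection on path components and on all homotopy groups at all basepoints. -/
def IsWeakHomotopyEquiv {X Y : TopCat} (f : X ⟶ Y) : Prop :=
  Function.Bijective (ZerothHomotopy.map (f.hom : C(X, Y))) ∧
    ∀ (n : ℕ) (x : X), Function.Bijective (HomotopyGroup.map (f.hom : C(X, Y)) (Fin n) x)

/-- A weak equivalence of simplicial sets: a map whose geometric realization is a
weak homotopy equivalence. -/
def WeakEquiv {A B : SSet} (f : A ⟶ B) : Prop :=
  IsWeakHomotopyEquiv (SSet.toTop.map f)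


/-! ### Semi-theories -/

/-- The objects `[1], [2], [3], …` of a semi-theory, indexed by positive integers. -/
@[ext]
structure Ob : Type where
  val : ℕ+

instance : Coe ℕ+ Ob := ⟨Ob.mk⟩

/-- An (unpointed) semi-theory: a category with objects `[1], [2], …`
together with distinguished projection morphisms `p^n_k : [n] ⟶ [1]`, where `p^1_1 = 𝟙 [1]`. -/
structure SemiTheory : Type 1 where
  cat : Category.{0, 0} Ob
  proj : ∀ n : ℕ+, Fin n → @Quiver.Hom Ob cat.toCategoryStruct.toQuiver ⟨n⟩ ⟨1⟩
  proj_one : proj 1 ⟨0, Nat.one_pos⟩ = cat.toCategoryStruct.id ⟨1⟩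

/-- The category of diagrams of simplicial sets over (the underlying category of)
a semi-theory. -/
abbrev SemiTheory.Diag (S : SemiTheory) : Type 1 :=
  @CategoryTheory.Functor Ob S.cat SSet _

/-- The `n`-fold levelwise power of a simplicial set. -/
@[simps]
def finPow (n : ℕ+) (A : SSet) : SSet where
  obj m := Fin n → A.obj m
  map θ := TypeCat.ofHom (fun a k => A.map θ (a k))

/-- The canonical comparison map `X[n] ⟶ X[1]^n` of a diagram over a semi-theory,
whose components are induced by the projections. -/
def SemiTheory.projFan (S : SemiTheory) (X : S.Diag) (n : ℕ+) :
    (letI := S.cat; (X.obj ⟨n⟩ ⟶ finPow n (X.obj ⟨1⟩))) :=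
  letI := S.cat
  { app := fun m => TypeCat.ofHom (fun a k => (X.map (S.proj n k)).app m a)
    naturality := fun m m' θ => by
      ext a
      funext k
      exact NatTrans.naturality_apply (X.map (S.proj n k)) θ a }

/-- A strict algebra over a semi-theory: the comparison maps `X[n] ⟶ X[1]^n` are
isomorphisms for all `n > 1`. -/
def SemiTheory.IsStrictAlgebra (S : SemiTheory) (X : S.Diag) : Prop :=
  ∀ n : ℕ+, 1 < (n : ℕ) → IsIso (S.projFan X n)

/-- A homotopy algebra over a semi-theory: the comparison maps `X[n] ⟶ X[1]^n` are
weak equivalences of simplicial sets for all `n > 1`. -/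
def SemiTheory.IsHomotopyAlgebra (S : SemiTheory) (X : S.Diag) : Prop :=
  ∀ n : ℕ+, 1 < (n : ℕ) → WeakEquiv (S.projFan X n)

/-- A semi-theory is an algebraic theory if composition with the projections induces
bijections `Hom([m],[n]) ≅ Hom([m],[1])^n` for all `m` and all `n > 1`. -/
def SemiTheory.IsAlgebraic (S : SemiTheory) : Prop :=
  letI := S.cat
  ∀ (m n : ℕ+), 1 < (n : ℕ) →
    Function.Bijective (fun (f : (⟨m⟩ : Ob) ⟶ ⟨n⟩) (k : Fin n) => f ≫ S.proj n k)

/-- The comparison map `X[n] ⟶ X[1]^n` for a diagram of simplicial sets over any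
category equipped with objects `[n]` and projection morphisms. -/
def projFanAt {C : Type} [Category.{0} C] (o : ℕ+ → C) (p : ∀ n : ℕ+, Fin n → (o n ⟶ o 1))
    (X : C ⥤ SSet) (n : ℕ+) : X.obj (o n) ⟶ finPow n (X.obj (o 1)) where
  app m := TypeCat.ofHom (fun a k => (X.map (p n k)).app m a)
  naturality m m' θ := by
    ext a
    funext k
    exact NatTrans.naturality_apply (X.map (p n k)) θ a

/-- Strictness of a diagram with respect to given objects and projections. -/
def IsStrictAt {C : Type} [Category.{0} C] (o : ℕ+ → C)
    (p : ∀ n : ℕ+, Fin n → (o n ⟶ o 1)) (X : C ⥤ SSet) : Prop :=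
  ∀ n : ℕ+, 1 < (n : ℕ) → IsIso (projFanAt o p X n)

/-- The homotopy-algebra condition for a diagram with respect to given objects
and projections. -/
def IsHomotopyAt {C : Type} [Category.{0} C] (o : ℕ+ → C)
    (p : ∀ n : ℕ+, Fin n → (o n ⟶ o 1)) (X : C ⥤ SSet) : Prop :=
  ∀ n : ℕ+, 1 < (n : ℕ) → WeakEquiv (projFanAt o p X n)

/-! ### Free semi-theories -/

/-- Generating data for a free semi-theory: a family of free generators that are
not projections (the projections are added separately as free generators). -/
structure GenData : Type 1 where
  gen : ℕ+ → ℕ+ → Type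

/-- The generating quiver of the free semi-theory on `G`: the generators of `G`
together with projection arrows `p^n_k : [n] → [1]` for `n > 1`
(the projection `p^1_1` is the identity, i.e. the empty path). -/
inductive Arr (G : GenData) : ℕ+ → ℕ+ → Type
  | gen {a b : ℕ+} : G.gen a b → Arr G a b
  | proj {n : ℕ+} (h : 1 < (n : ℕ)) (k : Fin n) : Arr G n 1

/-- The object type of the free semi-theory on `G` (a copy of `Ob`). -/
def FreeOb (G : GenData) : Type := Ob

instance freeQuiver (G : GenData) : Quiver (FreeOb G) :=
  ⟨fun a b => Arr G (Ob.val a) (Ob.val b)⟩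

/-- The free semi-theory on `G`, as a category: the paths category on the
generating quiver. -/
abbrev FreeST (G : GenData) := CategoryTheory.Paths (FreeOb G)

/-- The object `[n]` of the free semi-theory. -/
def FreeST.of (G : GenData) (n : ℕ+) : FreeST G := (⟨n⟩ : Ob)

/-- The generating projection arrow, as an arrow of the generating quiver. -/
def projArr (G : GenData) {n : ℕ+} (h : 1 < (n : ℕ)) (k : Fin n) :
    @Quiver.Hom (FreeOb G) _ (FreeST.of G n) (FreeST.of G 1) := Arr.proj h k

/-- The projection `p^n_k` in the free semi-theory. -/
def projPath (G : GenData) (n : ℕ+) (k : Fin n) : FreeST.of G n ⟶ FreeST.of G 1 :=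
  if h : 1 < (n : ℕ) then (projArr G h k).toPath
  else eqToHom (congrArg (FreeST.of G)
    (PNat.coe_injective (by
      rw [PNat.one_coe]
      exact le_antisymm (not_lt.1 h) n.pos)))

/-- The free semi-theory on `G`, as a semi-theory. -/
def freeSemiTheory (G : GenData) : SemiTheory where
  cat := inferInstanceAs (Category (FreeST G))
  proj n k := projPath G n k
  proj_one := by
    show projPath G 1 ⟨0, Nat.one_pos⟩ = _
    rw [projPath, dif_neg (by norm_num)]
    rfl

/-- The initial semi-theory `P` has no generators besides the projections. -/
def emptyGen : GenData := ⟨fun _ _ => PEmpty⟩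

/-- The underlying category of the initial semi-theory `P`. -/
abbrev PCat := FreeST emptyGen

/-- The initial semi-theory `P`: its only non-identity morphisms are the projections. -/
def PTheory : SemiTheory := freeSemiTheory emptyGen

/-- The action of the unique morphism of semi-theories `P ⟶ C` on generating arrows. -/
def jArr (G : GenData) : ∀ {a b : ℕ+}, Arr emptyGen a b →
    @Quiver.Path (FreeOb G) _ ((⟨a⟩ : Ob) : FreeST G) ((⟨b⟩ : Ob) : FreeST G)
  | _, _, .gen α => α.elim
  | _, _, .proj h k => (projArr G h k).toPath

/-- The unique morphism of semi-theories `P ⟶ C` into a free semi-theory. -/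
def Jfree (G : GenData) : PCat ⥤ FreeST G :=
  Paths.lift
    { obj := fun n => (n : FreeST G)
      map := fun {a b} e => jArr G e }

/-! ### The completion of a free semi-theory -/

/-- Trees representing the morphisms `[n] ⟶ [1]` of the completion `C̄` of a free
semi-theory: either a single edge labelled by a projection `p^n_k`, or a tree whose
lowest edge is labelled by a component `α_i` of a non-projection generator
`α : [m] ⟶ [r]` and which is obtained by grafting `m` smaller trees. -/
inductive CTree (G : GenData) (n : ℕ+) : Type
  | proj (k : Fin n) : CTree G n
  | node {m r : ℕ+} (α : G.gen m r) (i : Fin r) (ts : Fin m → CTree G n) : CTree G n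

/-- Morphisms `[n] ⟶ [m]` in the completion: `m`-tuples of trees. -/
def CompHom (G : GenData) (n m : ℕ+) : Type := Fin m → CTree G n

/-- Grafting: substituting the trees `T k` for the initial edges labelled `p^m_k`. -/
def CTree.graft {G : GenData} {n m : ℕ+} : CTree G m → CompHom G n m → CTree G n
  | .proj k, T => T k
  | .node α i ts, T => .node α i (fun j => (ts j).graft T)

/-- The identity of the completion. -/
def compId (G : GenData) (n : ℕ+) : CompHom G n n := fun k => .proj k

/-- Composition in the completion, by grafting. -/
def compComp {G : GenData} {a b c : ℕ+} (T : CompHom G a b) (S : CompHom G b c) :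
    CompHom G a c :=
  fun j => (S j).graft T

theorem CTree.graft_id {G : GenData} {m : ℕ+} (t : CTree G m) :
    t.graft (compId G m) = t := by
  induction t with
  | proj k => rfl
  | node α i ts ih =>
      simp only [CTree.graft]
      congr 1
      funext j
      exact ih j

theorem CTree.graft_graft {G : GenData} {a b c : ℕ+} (s : CTree G c)
    (U : CompHom G b c) (T : CompHom G a b) :
    (s.graft U).graft T = s.graft (compComp T U) := by
  induction s with
  | proj k => rfl
  | node α i ts ih =>
      simp only [CTree.graft]
      congr 1
      funext j
      exact ih j

/-- The object type of the completion (a copy of `Ob`). -/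
def CompOb (G : GenData) : Type := Ob

/-- The completion `C̄` of a free semi-theory, as a category. -/
instance compCategory (G : GenData) : Category (CompOb G) where
  Hom n m := CompHom G (Ob.val n) (Ob.val m)
  id n := compId G _
  comp f g := compComp f g
  id_comp f := funext fun j => CTree.graft_id _
  comp_id f := rfl
  assoc f g h := funext fun j => (CTree.graft_graft _ _ _).symm

/-- The object `[n]` of the completion. -/
def CompOb.of (G : GenData) (n : ℕ+) : CompOb G := (⟨n⟩ : Ob)

/-- The projection `p̂^n_k` of the completion: a single edge labelled `p^n_k`. -/
def compProj (G : GenData) (n : ℕ+) (k : Fin n) : CompOb.of G n ⟶ CompOb.of G 1 :=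
  fun _ => .proj k

/-- The completion, as a semi-theory. -/
def compSemiTheory (G : GenData) : SemiTheory where
  cat := inferInstanceAs (Category (CompOb G))
  proj n k := compProj G n k
  proj_one := by
    funext i
    have h0 : i = ⟨0, Nat.one_pos⟩ := Fin.ext (Nat.lt_one_iff.mp i.isLt)
    rw [h0]
    rfl

/-- The completion functor `Φ` on generating arrows. -/
def phiArr (G : GenData) : ∀ {a b : ℕ+}, Arr G a b → CompHom G a b
  | _, _, .gen α => fun i => .node α i (fun k => .proj k)
  | _, _, .proj _ k => fun _ => .proj k

/-- The completion functor `Φ_C : C ⟶ C̄` of a free semi-theory. -/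
def phi (G : GenData) : FreeST G ⥤ CompOb G :=
  Paths.lift
    { obj := fun n => (n : CompOb G)
      map := fun {a b} e => phiArr G e }

/-! ### Discrete simplicial sets, products, mapping complexes -/

/-- The discrete simplicial set on a type. -/
@[simps]
def disc (A : Type) : SSet where
  obj _ := A
  map _ := TypeCat.ofHom id

/-- The map of discrete simplicial sets induced by a function. -/
@[simps]
def disc.map {A B : Type} (f : A → B) : disc A ⟶ disc B where
  app _ := TypeCat.ofHom f

/-- The diagram of (discrete) simplicial sets corepresented by the object `[n]`
of a semi-theory. -/
def SemiTheory.corep (S : SemiTheory) (n : ℕ+) : S.Diag :=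
  letI := S.cat
  { obj := fun m => disc ((⟨n⟩ : Ob) ⟶ m)
    map := fun f => disc.map (fun g => g ≫ f)
    map_id := fun m => by
      apply NatTrans.ext
      funext x; ext g
      exact Category.comp_id (obj := Ob) g
    map_comp := fun f f' => by
      apply NatTrans.ext
      funext x; ext g
      exact (Category.assoc (obj := Ob) g _ _).symm }

/-- Levelwise product of two simplicial sets. -/
@[simps]
def mulC (A K : SSet) : SSet where
  obj m := A.obj m × K.obj m
  map θ := TypeCat.ofHom (fun p => (A.map θ p.1, K.map θ p.2))
  map_id m := by ext p <;> simp
  map_comp f g := by ext p <;> simp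

/-- `f × id` on levelwise products. -/
@[simps]
def mulC.mapLeft {A B : SSet} (f : A ⟶ B) (K : SSet) : mulC A K ⟶ mulC B K where
  app m := TypeCat.ofHom (fun p => (f.app m p.1, p.2))
  naturality m m' θ := by
    ext p
    simp only [mulC_obj, mulC_map, types_comp_apply]
    change (f.app m' (A.map θ p.1), K.map θ p.2) = (B.map θ (f.app m p.1), K.map θ p.2)
    exact Prod.ext (NatTrans.naturality_apply f θ p.1) rfl

/-- `id × g` on levelwise products. -/
@[simps]
def mulC.mapRight (A : SSet) {K L : SSet} (g : K ⟶ L) : mulC A K ⟶ mulC A L where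
  app m := TypeCat.ofHom (fun p => (p.1, g.app m p.2))
  naturality m m' θ := by
    ext p
    simp only [mulC_obj, mulC_map, types_comp_apply]
    change (A.map θ p.1, g.app m' (K.map θ p.2)) = (A.map θ p.1, L.map θ (g.app m p.2))
    exact Prod.ext rfl (NatTrans.naturality_apply g θ p.2)

theorem mulC.mapRight_id (A K : SSet) : mulC.mapRight A (𝟙 K) = 𝟙 (mulC A K) := by
  apply NatTrans.ext; funext x; ext p; rfl

theorem mulC.mapRight_comp (A : SSet) {K L M : SSet} (g : K ⟶ L) (h : L ⟶ M) :
    mulC.mapRight A (g ≫ h) = mulC.mapRight A g ≫ mulC.mapRight A h := by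
  apply NatTrans.ext; funext x; ext p; rfl

/-- Naturality, in applied form. -/
theorem natApply {C : Type} [Category C] {X Y : C ⥤ SSet} (f : X ⟶ Y)
    {c c' : C} (φ : c ⟶ c') (x : SimplexCategoryᵒᵖ) (a : (X.obj c).obj x) :
    (f.app c').app x ((X.map φ).app x a) = (Y.map φ).app x ((f.app c).app x a) :=
  ConcreteCategory.congr_hom (NatTrans.congr_app (f.naturality φ) x) a

/-- The objectwise product of a diagram of simplicial sets with a constant
simplicial set. -/
@[simps]
def prodConst {C : Type} [Category C] (X : C ⥤ SSet) (K : SSet) : C ⥤ SSet where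
  obj c := mulC (X.obj c) K
  map f := mulC.mapLeft (X.map f) K
  map_id c := by
    apply NatTrans.ext; funext x; ext p
    show ((X.map (𝟙 c)).app x p.1, p.2) = p
    rw [X.map_id]
    rfl
  map_comp f g := by
    apply NatTrans.ext; funext x; ext p
    show ((X.map (f ≫ g)).app x p.1, p.2) = _
    rw [X.map_comp]
    rfl

/-- Functoriality of `prodConst` in the diagram variable. -/
@[simps]
def prodConst.mapX {C : Type} [Category C] {X X' : C ⥤ SSet} (f : X ⟶ X') (K : SSet) :
    prodConst X K ⟶ prodConst X' K where
  app c := mulC.mapLeft (f.app c) K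
  naturality c c' φ := by
    apply NatTrans.ext; funext x; ext p
    simp only [prodConst_obj, prodConst_map, NatTrans.comp_app, mulC.mapLeft_app,
      types_comp_apply]
    exact Prod.ext (natApply f φ x p.1) rfl

/-- Functoriality of `prodConst` in the constant variable. -/
@[simps]
def prodConst.mapK {C : Type} [Category C] (X : C ⥤ SSet) {K L : SSet} (g : K ⟶ L) :
    prodConst X K ⟶ prodConst X L where
  app c := mulC.mapRight (X.obj c) g
  naturality c c' φ := by
    apply NatTrans.ext; funext x; ext p
    rfl

theorem prodConst.mapK_id {C : Type} [Category C] (X : C ⥤ SSet) (K : SSet) :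
    prodConst.mapK X (𝟙 K) = 𝟙 (prodConst X K) := by
  apply NatTrans.ext; funext c
  exact mulC.mapRight_id _ _

theorem prodConst.mapK_comp {C : Type} [Category C] (X : C ⥤ SSet) {K L M : SSet}
    (g : K ⟶ L) (h : L ⟶ M) :
    prodConst.mapK X (g ≫ h) = prodConst.mapK X g ≫ prodConst.mapK X h := by
  apply NatTrans.ext; funext c
  exact mulC.mapRight_comp _ _ _

/-- The standard simplex `Δ[k]`, for `k : SimplexCategoryᵒᵖ`. -/
def stdS (k : SimplexCategoryᵒᵖ) : SSet := SSet.stdSimplex.obj k.unop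

/-- Functoriality of the standard simplex (contravariantly in `SimplexCategoryᵒᵖ`). -/
def stdMap {k l : SimplexCategoryᵒᵖ} (θ : k ⟶ l) : stdS l ⟶ stdS k :=
  SSet.stdSimplex.map θ.unop

theorem stdMap_id (k : SimplexCategoryᵒᵖ) : stdMap (𝟙 k) = 𝟙 (stdS k) :=
  SSet.stdSimplex.map_id _

theorem stdMap_comp {k l m : SimplexCategoryᵒᵖ} (θ : k ⟶ l) (η : l ⟶ m) :
    stdMap (θ ≫ η) = stdMap η ≫ stdMap θ :=
  SSet.stdSimplex.map_comp _ _

/-- The simplicial mapping complex of two diagrams of simplicial sets: its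
`m`-simplices are the natural transformations `X × Δ[m] ⟶ Y`. -/
def MapCx {C : Type} [Category C] (X Y : C ⥤ SSet) : SSet where
  obj m := prodConst X (stdS m) ⟶ Y
  map {m m'} θ := TypeCat.ofHom (fun t => prodConst.mapK X (stdMap θ) ≫ t)
  map_id m := by
    ext t
    simp [stdMap_id, prodConst.mapK_id]
  map_comp θ η := by
    ext t
    simp [stdMap_comp, prodConst.mapK_comp]

/-- Precomposition on mapping complexes. -/
def MapCx.pre {C : Type} [Category C] {X X' : C ⥤ SSet} (f : X' ⟶ X) (Y : C ⥤ SSet) :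
    MapCx X Y ⟶ MapCx X' Y where
  app m := TypeCat.ofHom (fun t => prodConst.mapX f (stdS m) ≫ t)
  naturality m m' θ := by
    ext t
    rfl

/-- Postcomposition on mapping complexes. -/
def MapCx.post {C : Type} [Category C] (X : C ⥤ SSet) {Y Y' : C ⥤ SSet} (g : Y ⟶ Y') :
    MapCx X Y ⟶ MapCx X Y' where
  app m := TypeCat.ofHom (fun t => t ≫ g)
  naturality m m' θ := by
    ext t
    rfl

/-- Restriction of mapping complexes along a functor. -/
def MapCx.whisk {C D : Type} [Category C] [Category D] (F : D ⥤ C) (X Y : C ⥤ SSet) :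
    MapCx X Y ⟶ MapCx (F ⋙ X) (F ⋙ Y) where
  app m := TypeCat.ofHom (fun (t : prodConst X (stdS m) ⟶ Y) =>
    (show prodConst (F ⋙ X) (stdS m) ⟶ F ⋙ Y from CategoryTheory.Functor.whiskerLeft F t))
  naturality m m' θ := by
    ext t
    rfl

/-- The simplicial mapping complex of two simplicial sets: its `m`-simplices are
the maps `A × Δ[m] ⟶ B`. -/
def sMap (A B : SSet) : SSet where
  obj m := mulC A (stdS m) ⟶ B
  map {m m'} θ := TypeCat.ofHom (fun t => mulC.mapRight A (stdMap θ) ≫ t)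
  map_id m := by
    ext t
    simp [stdMap_id, mulC.mapRight_id]
  map_comp θ η := by
    ext t
    simp [stdMap_comp, mulC.mapRight_comp]

/-- Precomposition on simplicial mapping complexes. -/
def sMap.pre {A A' : SSet} (f : A' ⟶ A) (B : SSet) : sMap A B ⟶ sMap A' B where
  app m := TypeCat.ofHom (fun t => mulC.mapLeft f (stdS m) ≫ t)
  naturality m m' θ := by
    ext t
    rfl

/-- Postcomposition on simplicial mapping complexes. -/
def sMap.post (A : SSet) {B B' : SSet} (g : B ⟶ B') : sMap A B ⟶ sMap A B' where
  app m := TypeCat.ofHom (fun t => t ≫ g)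
  naturality m m' θ := by
    ext t
    rfl

/-! ### Decompositions of morphisms of a free semi-theory -/

/-- Whether a generating arrow is a generator of `G` (as opposed to a projection). -/
def Arr.isGen {G : GenData} : ∀ {a b : ℕ+}, Arr G a b → Prop
  | _, _, .gen _ => True
  | _, _, .proj _ _ => False

/-- A morphism `φ = α_k ∘ ⋯ ∘ α_1` of a free semi-theory (a path in the generating
quiver) starts with a non-projection: `α_1` is not a projection. -/
def startsNonProj {G : GenData} : ∀ {a b : FreeOb G}, Quiver.Path a b → Prop
  | _, _, .nil => False
  | _, _, .cons .nil e => Arr.isGen e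
  | _, _, .cons (.cons p e') _ => startsNonProj (Quiver.Path.cons p e')

/-- The first `j` arrows of a path (together with their target). -/
def pathTake {V : Type} [Quiver.{1} V] {a : V} : ∀ {b : V}, Quiver.Path a b → ℕ → Σ c : V, Quiver.Path a c
  | _, .nil, _ => ⟨a, .nil⟩
  | b, .cons p e, j => if j ≤ p.length then pathTake p j else ⟨b, .cons p e⟩

/-! ### The diagram `D̄_n` and its filtrations -/

/-- The `D`-diagram `D̄_n` with `D̄_n[m] = Hom_{D̄}([n],[m])`, where the `D`-action
is given by composition via the completion functor `Φ`. -/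
def barDn (G : GenData) (n : ℕ+) : FreeST G ⥤ SSet where
  obj m := disc (CompOb.of G n ⟶ (phi G).obj m)
  map {a b} ψ := disc.map (fun T => T ≫ (phi G).map ψ)
  map_id a := by
    apply NatTrans.ext
    funext x; ext T
    show T ≫ (phi G).map (𝟙 a) = T
    rw [CategoryTheory.Functor.map_id]; exact Category.comp_id _
  map_comp {a b c} ψ ψ' := by
    apply NatTrans.ext
    funext x; ext T
    show T ≫ (phi G).map (ψ ≫ ψ') = (T ≫ (phi G).map ψ) ≫ (phi G).map ψ'
    rw [CategoryTheory.Functor.map_comp]; exact (Category.assoc _ _ _).symm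

/-- The filtration of `D̄_n` by sub-`D`-diagrams:
`D̄_n^0 = D_n` (the image of the corepresented diagram) and `D̄_n^{k+1}` is the
smallest sub-`D`-diagram containing all tuples of elements of `D̄_n^k[1]`. -/
def Filt (G : GenData) (n : ℕ+) : ℕ → ∀ m : ℕ+, Set (CompHom G n m)
  | 0, m => {T | ∃ ψ : FreeST.of G n ⟶ FreeST.of G m, T = (phi G).map ψ}
  | k+1, m => {T | ∃ (m' : ℕ+) (S : CompHom G n m')
      (ψ : FreeST.of G m' ⟶ FreeST.of G m),
      (∀ j : Fin m', (fun _ : Fin 1 => S j) ∈ Filt G n k 1) ∧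
        T = (S : CompOb.of G n ⟶ CompOb.of G m') ≫ (phi G).map ψ}

/-- The filtration of `D̄_n` by sub-`P`-diagrams: `sD̄_n^0 = D_n` and `sD̄_n^{k+1}` is
the smallest sub-`P`-diagram containing all tuples of elements of `D̄ₙ^k[1]`. -/
def sFilt (G : GenData) (n : ℕ+) : ℕ → ∀ m : ℕ+, Set (CompHom G n m)
  | 0, m => Filt G n 0 m
  | k+1, m => {T | ∀ j : Fin m, (fun _ : Fin 1 => T j) ∈ Filt G n k 1}

theorem Filt.closed (G : GenData) (n : ℕ+) (k : ℕ) {a b : ℕ+}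
    {T : CompOb.of G n ⟶ CompOb.of G a} (hT : T ∈ Filt G n k a)
    (ψ : FreeST.of G a ⟶ FreeST.of G b) : T ≫ (phi G).map ψ ∈ Filt G n k b := by
  cases k with
  | zero =>
      obtain ⟨ψ₀, rfl⟩ := hT
      exact ⟨ψ₀ ≫ ψ, ((phi G).map_comp ψ₀ ψ).symm⟩
  | succ k =>
      obtain ⟨m', S, ψ₁, hS, rfl⟩ := hT
      exact ⟨m', S, ψ₁ ≫ ψ, hS, by rw [CategoryTheory.Functor.map_comp]; exact Category.assoc _ _ _⟩

theorem phi_map_toPath (G : GenData) {a b : FreeOb G}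
    (e : @Quiver.Hom (FreeOb G) _ a b) :
    (phi G).map e.toPath = phiArr G e :=
  Paths.lift_toPath _ _

theorem Filt.comp_proj (G : GenData) (n : ℕ+) (k : ℕ) {m : ℕ+} {T : CompHom G n m}
    (hT : T ∈ Filt G n k m) (j : Fin m) : (fun _ : Fin 1 => T j) ∈ Filt G n k 1 := by
  by_cases h : 1 < (m : ℕ)
  · have hc := Filt.closed G n k hT (projPath G m j)
    have he : (T : CompOb.of G n ⟶ CompOb.of G m) ≫ (phi G).map (projPath G m j)
        = (fun _ : Fin 1 => T j) := by
      unfold projPath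
      rw [dif_pos h]
      rw [phi_map_toPath G (projArr G h j)]
      rfl
    exact he ▸ hc
  · have hm : m = 1 := PNat.coe_injective (by
      rw [PNat.one_coe]
      exact le_antisymm (not_lt.1 h) m.pos)
    subst hm
    have ht : (fun _ : Fin 1 => T j) = T := by
      funext i
      congr 1
      exact Fin.ext (by
        rw [Nat.lt_one_iff.mp i.isLt, Nat.lt_one_iff.mp j.isLt])
    rwa [ht]

theorem sFilt.closed_arr (G : GenData) (n : ℕ+) (k : ℕ) {c b : ℕ+}
    {T : CompHom G n c} (hT : T ∈ sFilt G n k c) (e : Arr emptyGen c b) :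
    (T : CompOb.of G n ⟶ CompOb.of G c) ≫ (phi G).map (jArr G e) ∈ sFilt G n k b := by
  cases e with
  | gen α => exact α.elim
  | proj h j =>
      have h1 : (phi G).map (jArr G (Arr.proj h j)) = phiArr G (Arr.proj h j) := by
        show (phi G).map (projArr G h j).toPath = _
        exact phi_map_toPath G _
      rw [h1]
      show (fun _ : Fin 1 => T j) ∈ sFilt G n k 1
      cases k with
      | zero => exact Filt.comp_proj G n 0 hT j
      | succ k' => intro i; exact hT j

theorem sFilt.closed (G : GenData) (n : ℕ+) (k : ℕ) {a b : PCat}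
    {T : CompOb.of G n ⟶ CompOb.of G (Ob.val a)} (hT : T ∈ sFilt G n k (Ob.val a))
    (ψ : a ⟶ b) :
    T ≫ (phi G).map ((Jfree G).map ψ) ∈ sFilt G n k (Ob.val b) := by
  change Quiver.Path (V := FreeOb emptyGen) a b at ψ
  induction ψ with
  | nil => exact hT
  | cons p e ih =>
      have h1 : (phi G).map ((Jfree G).map (Quiver.Path.cons p e))
          = (phi G).map ((Jfree G).map p) ≫ (phi G).map (jArr G e) := by
        show (phi G).map ((Jfree G).map (p ≫ Quiver.Hom.toPath e)) = _
        exact (congrArg (phi G).map ((Jfree G).map_comp p (Quiver.Hom.toPath e))).trans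
          (((phi G).map_comp _ _).trans (congrArg (fun f => (phi G).map ((Jfree G).map p) ≫ f)
            (congrArg (phi G).map (Paths.lift_toPath _ _))))
      have heq := (congrArg (fun f => T ≫ f) h1).trans (Category.assoc _ _ _).symm
      exact (congrArg (fun x => x ∈ sFilt G n k _) heq).mpr (sFilt.closed_arr G n k ih e)

/-- The sub-`D`-diagram `D̄_n^k` of `D̄_n`. -/
def FiltDiag (G : GenData) (n : ℕ+) (k : ℕ) : FreeST G ⥤ SSet where
  obj m := disc (Filt G n k (Ob.val m))
  map {a b} ψ := disc.map (fun T => ⟨T.1 ≫ (phi G).map ψ, Filt.closed G n k T.2 ψ⟩)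
  map_id a := by
    apply NatTrans.ext
    funext x; ext T
    apply Subtype.ext
    show T.1 ≫ (phi G).map (𝟙 a) = T.1
    rw [CategoryTheory.Functor.map_id]; exact Category.comp_id _
  map_comp {a b c} ψ ψ' := by
    apply NatTrans.ext
    funext x; ext T
    apply Subtype.ext
    show T.1 ≫ (phi G).map (ψ ≫ ψ') = (T.1 ≫ (phi G).map ψ) ≫ (phi G).map ψ'
    rw [CategoryTheory.Functor.map_comp]; exact (Category.assoc _ _ _).symm

/-- The sub-`P`-diagram `sD̄_n^k` of `D̄_n`. -/
def sFiltDiag (G : GenData) (n : ℕ+) (k : ℕ) : PCat ⥤ SSet where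
  obj m := disc (sFilt G n k (Ob.val m))
  map {a b} ψ := disc.map (fun T => ⟨T.1 ≫ (phi G).map ((Jfree G).map ψ),
    sFilt.closed G n k T.2 ψ⟩)
  map_id a := by
    apply NatTrans.ext
    funext x; ext T
    apply Subtype.ext
    show T.1 ≫ (phi G).map ((Jfree G).map (𝟙 a)) = T.1
    rw [CategoryTheory.Functor.map_id, CategoryTheory.Functor.map_id]; exact Category.comp_id _
  map_comp {a b c} ψ ψ' := by
    apply NatTrans.ext
    funext x; ext T
    apply Subtype.ext
    show T.1 ≫ (phi G).map ((Jfree G).map (ψ ≫ ψ')) =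
      (T.1 ≫ (phi G).map ((Jfree G).map ψ)) ≫ (phi G).map ((Jfree G).map ψ')
    rw [CategoryTheory.Functor.map_comp, CategoryTheory.Functor.map_comp]; exact (Category.assoc _ _ _).symm


theorem Filt.mono (G : GenData) (n : ℕ+) (k : ℕ) (m : ℕ+) :
    Filt G n k m ⊆ Filt G n (k+1) m := by
  intro T hT
  exact ⟨m, T, 𝟙 _, fun j => Filt.comp_proj G n k hT j,
    by rw [CategoryTheory.Functor.map_id]; exact (Category.comp_id (obj := CompOb G) T).symm⟩

theorem Filt.subset_sFilt (G : GenData) (n : ℕ+) (k : ℕ) (m : ℕ+) :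
    Filt G n k m ⊆ sFilt G n (k+1) m :=
  fun _ hT j => Filt.comp_proj G n k hT j

theorem sFilt.subset_Filt (G : GenData) (n : ℕ+) (k : ℕ) (m : ℕ+) :
    sFilt G n (k+1) m ⊆ Filt G n (k+1) m := by
  intro T hT
  exact ⟨m, T, 𝟙 _, hT, by rw [CategoryTheory.Functor.map_id]; exact (Category.comp_id (obj := CompOb G) T).symm⟩

/-- Restriction of a `D`-diagram to a `P`-diagram. -/
def resP (G : GenData) (X : FreeST G ⥤ SSet) : PCat ⥤ SSet := Jfree G ⋙ X

/-- The inclusion `D̄_n^k ⟶ D̄_n^{k+1}` of sub-`D`-diagrams. -/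
def filtIncl (G : GenData) (n : ℕ+) (k : ℕ) : FiltDiag G n k ⟶ FiltDiag G n (k+1) where
  app m := disc.map (Set.inclusion (Filt.mono G n k (Ob.val m)))
  naturality a b ψ := by
    apply NatTrans.ext
    funext x; ext T
    apply Subtype.ext
    rfl

/-- The inclusion `D̄_n^k ⟶ sD̄_n^{k+1}` of sub-`P`-diagrams. -/
def filtInclS (G : GenData) (n : ℕ+) (k : ℕ) :
    resP G (FiltDiag G n k) ⟶ sFiltDiag G n (k+1) where
  app m := disc.map (Set.inclusion (Filt.subset_sFilt G n k (Ob.val m)))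
  naturality a b ψ := by
    apply NatTrans.ext
    funext x; ext T
    apply Subtype.ext
    rfl

/-- The inclusion `sD̄_n^{k+1} ⟶ D̄_n^{k+1}` of sub-`P`-diagrams. -/
def sFiltIncl (G : GenData) (n : ℕ+) (k : ℕ) :
    sFiltDiag G n (k+1) ⟶ resP G (FiltDiag G n (k+1)) where
  app m := disc.map (Set.inclusion (sFilt.subset_Filt G n k (Ob.val m)))
  naturality a b ψ := by
    apply NatTrans.ext
    funext x; ext T
    apply Subtype.ext
    rfl

/-! Write `φ = ψ ∘ α` with `α` a non-projection generator. Every tree has a leaf, so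
`(T ≫ Φα) ≫ Φψ = (T' ≫ Φα) ≫ Φψ` forces some component of `T ≫ Φα` and `T' ≫ Φα` to agree.
That component is the tree with root edge `α_i` and the trees of `T` (resp. `T'`) grafted on
top, so `T = T'`. -/

theorem CTree.exists_eq_of_graft_eq {G : GenData} {n m : ℕ+} (U : CTree G m)
    {S S' : CompHom G n m} (h : U.graft S = U.graft S') : ∃ i, S i = S' i := by
  induction U with
  | proj k => exact ⟨k, h⟩
  | node α i ts ih =>
      simp only [CTree.graft, CTree.node.injEq, heq_eq_eq, true_and] at h
      exact ih ⟨0, PNat.pos _⟩ (congrFun h _)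

theorem exists_apply_eq_of_comp_eq {G : GenData} {n m s : ℕ+}
    {T T' : CompOb.of G n ⟶ CompOb.of G m} (U : CompOb.of G m ⟶ CompOb.of G s)
    (h : T ≫ U = T' ≫ U) : ∃ i, T i = T' i :=
  (U ⟨0, s.pos⟩).exists_eq_of_graft_eq (congrFun h _)

theorem eq_of_compComp_phiArr_apply_eq {G : GenData} {n m b : ℕ+} {T T' : CompHom G n m}
    (e : Arr G m b) (he : Arr.isGen e) {i : Fin b}
    (h : compComp T (phiArr G e) i = compComp T' (phiArr G e) i) : T = T' := by
  cases e with
  | proj => exact he.elim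
  | gen α =>
      change CTree.node α i (fun k => T k) = CTree.node α i (fun k => T' k) at h
      simp only [CTree.node.injEq, heq_eq_eq, true_and] at h
      exact funext (congrFun h)

theorem exists_eq_toPath_comp_of_startsNonProj {G : GenData} :
    ∀ {a c : FreeOb G} (φ : Quiver.Path a c), startsNonProj φ →
      ∃ (b : FreeOb G) (e : a ⟶ b) (ψ : Quiver.Path b c), Arr.isGen e ∧ φ = e.toPath.comp ψ
  | _, _, .nil, h => by simp only [startsNonProj] at h
  | _, _, .cons .nil e, h => by
      simp only [startsNonProj] at h
      exact ⟨_, e, .nil, h, rfl⟩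
  | _, _, .cons (.cons p e') e, h => by
      simp only [startsNonProj] at h
      obtain ⟨b, e₀, ψ, he₀, hψ⟩ := exists_eq_toPath_comp_of_startsNonProj (p.cons e') h
      exact ⟨b, e₀, ψ.cons e, he₀, by rw [hψ]; rfl⟩

theorem exists_phi_map_eq_phiArr_comp_of_startsNonProj {G : GenData} {r s : ℕ+}
    (φ : FreeST.of G r ⟶ FreeST.of G s) (hφ : startsNonProj φ) :
    ∃ (b : ℕ+) (e : Arr G r b) (ψ : FreeST.of G b ⟶ FreeST.of G s), Arr.isGen e ∧
      (phi G).map φ = (phiArr G e : CompOb.of G r ⟶ CompOb.of G b) ≫ (phi G).map ψ := by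
  obtain ⟨⟨b⟩, e, ψ, he, rfl⟩ := exists_eq_toPath_comp_of_startsNonProj φ hφ
  exact ⟨b, e, ψ, he, ((phi G).map_comp e.toPath ψ).trans
    (congrArg (· ≫ (phi G).map ψ) (phi_map_toPath G e))⟩

theorem comp_phi_injective (G : GenData) {n r s : ℕ+}
    (φ : FreeST.of G r ⟶ FreeST.of G s) (hφ : startsNonProj φ)
    (T T' : CompOb.of G n ⟶ CompOb.of G r)
    (h : T ≫ (phi G).map φ = T' ≫ (phi G).map φ) : T = T' := by
  obtain ⟨b, e, ψ, he, hfac⟩ := exists_phi_map_eq_phiArr_comp_of_startsNonProj φ hφ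
  obtain ⟨i, hi⟩ := exists_apply_eq_of_comp_eq ((phi G).map ψ) <| calc
    (T ≫ phiArr G e) ≫ (phi G).map ψ = T ≫ (phi G).map φ :=
      (Category.assoc _ _ _).trans (congrArg (T ≫ ·) hfac.symm)
    _ = T' ≫ (phi G).map φ := h
    _ = (T' ≫ phiArr G e) ≫ (phi G).map ψ :=
      (congrArg (T' ≫ ·) hfac).trans (Category.assoc _ _ _).symm
  exact eq_of_compComp_phiArr_apply_eq e he hi

end SemiThPaper
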